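/- arXiv:2306.02244 — 4 statements merged into one kernel-verified Lean document; each statement's English description precedes it below -/
import Mathlib

section
/- Let A_1 = 0 and define the sequence A_{d+1} = A_d + ((1-ω) - A_d)^2 / (1 - A_d) for a fixed ω ∈ (0,1). Then A_d < 1-ω for all d, the sequence is increasing, and A_d → 1-ω as d → ∞. -/
open Filter

private lemma aux_inv (r ω : ℝ) (hr : 0 < r) (hω : 0 < ω) :
    r⁻¹ - (r⁻¹)^2 / (ω + r⁻¹) = (r + 1/ω)⁻¹ := by
  have h1 : r ≠ 0 := ne_of_gt hr
  have h2 : ω + r⁻¹ ≠ 0 := by positivity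
  have h3 : ω ≠ 0 := ne_of_gt hω
  field_simp
  ring

/-- Fix `ω ∈ (0,1)`. If `A 1 = 0` and
`A (d+1) = A d + ((1-ω) - A d)^2 / (1 - A d)` for all `d ≥ 1`, then `A d < 1 - ω`
for all `d ≥ 1`, the sequence is increasing (from index 1 on), and `A d → 1 - ω`. -/
theorem stmt_0 (ω : ℝ) (hω0 : 0 < ω) (hω1 : ω < 1) (A : ℕ → ℝ)
    (hA1 : A 1 = 0)
    (hrec : ∀ d : ℕ, 1 ≤ d → A (d + 1) = A d + ((1 - ω) - A d) ^ 2 / (1 - A d)) :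
    (∀ d : ℕ, 1 ≤ d → A d < 1 - ω) ∧
    (∀ d : ℕ, 1 ≤ d → A d ≤ A (d + 1)) ∧
    Tendsto A atTop (nhds (1 - ω)) := by
  have hω : (0:ℝ) < 1 - ω := by linarith
  have key : ∀ n : ℕ, (1 - ω) - A (n+1) = ((1-ω)⁻¹ + (n:ℝ)/ω)⁻¹ := by
    intro n
    induction n with
    | zero => simp [hA1]
    | succ n ih =>
      have hpos : (0:ℝ) < (1-ω)⁻¹ + (n:ℝ)/ω := by positivity
      have he : (0:ℝ) < (1 - ω) - A (n+1) := ih ▸ inv_pos.mpr hpos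
      rw [hrec (n+1) (Nat.le_add_left 1 n)]
      set r := (1-ω)⁻¹ + (n:ℝ)/ω with hr
      have haux := aux_inv r ω hpos hω0
      have hA : A (n+1) = (1 - ω) - r⁻¹ := by linarith [ih]
      have hden : 1 - A (n+1) = ω + r⁻¹ := by rw [hA]; ring
      have hsq : ((1 - ω) - A (n+1))^2 = (r⁻¹)^2 := by rw [ih]
      have hcast : (1-ω)⁻¹ + ((n:ℕ)+1 : ℕ)/ω = r + 1/ω := by push_cast; rw [hr]; ring
      rw [hden, hsq, hcast, ← haux, hA]
      ring
  have hepos : ∀ n : ℕ, (0:ℝ) < (1 - ω) - A (n+1) := by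
    intro n
    have hpos : (0:ℝ) < (1-ω)⁻¹ + (n:ℝ)/ω := by positivity
    rw [key n]
    exact inv_pos.mpr hpos
  refine ⟨?_, ?_, ?_⟩
  · intro d hd
    obtain ⟨n, rfl⟩ := Nat.exists_eq_add_of_le hd
    have := hepos n
    rw [add_comm] at *
    linarith [hepos n]
  · intro d hd
    obtain ⟨n, rfl⟩ := Nat.exists_eq_add_of_le hd
    rw [add_comm 1 n] at *
    rw [hrec (n+1) (Nat.le_add_left 1 n)]
    have he := hepos n
    have h1A : (0:ℝ) < 1 - A (n+1) := by linarith
    have := div_nonneg (sq_nonneg ((1-ω) - A (n+1))) h1A.le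
    linarith
  · have h1 : Tendsto (fun n : ℕ => ((1-ω)⁻¹ + (n:ℝ)/ω)⁻¹) atTop (nhds 0) := by
      apply Tendsto.inv_tendsto_atTop
      apply tendsto_atTop_add_const_left
      exact Tendsto.atTop_div_const hω0 tendsto_natCast_atTop_atTop
    have h2 : Tendsto (fun n : ℕ => A (n+1)) atTop (nhds (1 - ω)) := by
      have : (fun n : ℕ => A (n+1)) = fun n : ℕ => (1 - ω) - ((1-ω)⁻¹ + (n:ℝ)/ω)⁻¹ := by
        funext n; linarith [key n]
      rw [this]
      simpa using (tendsto_const_nhds (x := (1-ω)) (f := atTop)).sub h1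
    exact (tendsto_add_atTop_iff_nat 1).mp h2
end

section
/- Let Σ be a positive definite covariance matrix on R^d, S, T ⊆ [d], β supported on S. Define Δ₁ = β_{S\T}^T Σ_{S\T|T} β_{S\T} / σ² and, for any α ∈ R^{|T\S|}, Δ₂(α) = (α_β - α)^T Σ_{T\S | S∩T} (α_β - α)/σ² where α_β = Σ_{T\S|S∩T}^{-1} Σ_{(T\S)(S\T)|S∩T} β_{S\T}. Then for X ~ N(0,Σ), Var[X_{S\T}^T β_{S\T} - X_{T\S}^T α | X_{S∩T}] = σ²(Δ₁ + Δ₂(α)). -/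
/-!
Conditioning on `T = (T\S) ∪ (S∩T)` can be done in two stages (the quotient property of Schur
complements): `Σ_{S\T|T} = Σ_{1|3} - Σ_{12|3} Σ_{2|3}⁻¹ Σ_{21|3}` with `1, 2, 3` standing for
`S\T, T\S, S∩T`. The conditional covariance of `(X_{S\T}, X_{T\S})` given `X_{S∩T}` is the block
matrix of the `Σ_{ij|3}`, and completing the square in its `T\S` block splits the quadratic form
at `(β, -α)` into `βᵀ Σ_{S\T|T} β` plus `(α_β - α)ᵀ Σ_{2|3} (α_β - α)`.
-/

open Matrix

namespace Matrix

variable {N k l m n p R : Type*}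

theorem submatrix_sumElim_sumElim (S : Matrix N N R) (a₁ : k → N) (a₂ : l → N) (c₁ : m → N)
    (c₂ : n → N) :
    S.submatrix (Sum.elim a₁ a₂) (Sum.elim c₁ c₂) =
      fromBlocks (S.submatrix a₁ c₁) (S.submatrix a₁ c₂) (S.submatrix a₂ c₁)
        (S.submatrix a₂ c₂) := by
  ext (i | i) (j | j) <;> rfl

theorem submatrix_sumElim_left (S : Matrix N N R) (a₁ : k → N) (a₂ : l → N) (c : m → N) :
    S.submatrix (Sum.elim a₁ a₂) c = fromRows (S.submatrix a₁ c) (S.submatrix a₂ c) := by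
  ext (i | i) j <;> rfl

theorem submatrix_sumElim_right (S : Matrix N N R) (a : k → N) (c₁ : l → N) (c₂ : m → N) :
    S.submatrix a (Sum.elim c₁ c₂) = fromCols (S.submatrix a c₁) (S.submatrix a c₂) := by
  ext i (j | j) <;> rfl

variable [CommRing R]

theorem sumElim_dotProduct_fromBlocks_mulVec [StarRing R] [TrivialStar R] [Fintype m]
    [Fintype n] [DecidableEq n] (A : Matrix m m R) (B : Matrix m n R) {D : Matrix n n R}
    (hD : D.IsHermitian) (hDdet : IsUnit D.det) (x : m → R) (y : n → R) :
    Sum.elim x y ⬝ᵥ (fromBlocks A B Bᴴ D *ᵥ Sum.elim x y) =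
      x ⬝ᵥ ((A - B * D⁻¹ * Bᴴ) *ᵥ x) +
        (D⁻¹ *ᵥ (Bᴴ *ᵥ x) + y) ⬝ᵥ (D *ᵥ (D⁻¹ *ᵥ (Bᴴ *ᵥ x) + y)) := by
  let := invertibleOfIsUnitDet _ hDdet
  have := schur_complement_eq₂₂ A B x y hD
  simp only [star_trivial, ← dotProduct_mulVec] at this
  rw [this, add_comm, mulVec_mulVec]

/-- `condCov S a c b` is `Σ_{ac|b}` for the index families `a`, `c`, `b` into `N`. -/
noncomputable def condCov [Fintype l] [DecidableEq l] (S : Matrix N N R) (a : m → N) (c : n → N)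
    (b : l → N) : Matrix m n R :=
  S.submatrix a c - S.submatrix a b * (S.submatrix b b)⁻¹ * S.submatrix b c

variable [Fintype l] [DecidableEq l]

theorem condCov_sumElim_sumElim (S : Matrix N N R) (a₁ : k → N) (a₂ : m → N)
    (c₁ : n → N) (c₂ : p → N) (b : l → N) :
    condCov S (Sum.elim a₁ a₂) (Sum.elim c₁ c₂) b =
      fromBlocks (condCov S a₁ c₁ b) (condCov S a₁ c₂ b) (condCov S a₂ c₁ b)
        (condCov S a₂ c₂ b) := by
  ext (i | i) (j | j) <;> rfl

theorem condCov_conjTranspose [StarRing R] {S : Matrix N N R}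
    (hS : S.IsHermitian) (a : m → N) (c : n → N) (b : l → N) :
    (condCov S a c b)ᴴ = condCov S c a b := by
  simp only [condCov, conjTranspose_sub, conjTranspose_mul, conjTranspose_nonsing_inv,
    conjTranspose_submatrix, hS.eq, Matrix.mul_assoc]

theorem isUnit_det_condCov [Fintype m] [DecidableEq m] {S : Matrix N N R} {a : m → N}
    {b : l → N} (hb : IsUnit (S.submatrix b b).det)
    (hab : IsUnit (S.submatrix (Sum.elim a b) (Sum.elim a b)).det) :
    IsUnit (condCov S a a b).det := by
  let := invertibleOfIsUnitDet _ hb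
  rw [submatrix_sumElim_sumElim, det_fromBlocks₂₂, invOf_eq_nonsing_inv] at hab
  exact isUnit_of_mul_isUnit_right hab

theorem condCov_sumElim_conditioning [Fintype k] [DecidableEq k]
    (S : Matrix N N R) (a : m → N) (c : n → N) {b₁ : k → N} {b₂ : l → N}
    (hb₂ : IsUnit (S.submatrix b₂ b₂).det)
    (hb : IsUnit (S.submatrix (Sum.elim b₁ b₂) (Sum.elim b₁ b₂)).det) :
    condCov S a c (Sum.elim b₁ b₂) =
      condCov S a c b₂ - condCov S a b₁ b₂ * (condCov S b₁ b₁ b₂)⁻¹ * condCov S b₁ c b₂ := by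
  let := invertibleOfIsUnitDet _ hb₂
  let _ : Invertible (S.submatrix b₁ b₁ - S.submatrix b₁ b₂ * ⅟(S.submatrix b₂ b₂) *
      S.submatrix b₂ b₁) := by
    rw [invOf_eq_nonsing_inv]
    exact invertibleOfIsUnitDet _ (isUnit_det_condCov hb₂ hb)
  rw [submatrix_sumElim_sumElim] at hb
  let := invertibleOfIsUnitDet _ hb
  have hinv := invOf_fromBlocks₂₂_eq (S.submatrix b₁ b₁) (S.submatrix b₁ b₂)
    (S.submatrix b₂ b₁) (S.submatrix b₂ b₂)
  simp only [invOf_eq_nonsing_inv] at hinv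
  simp only [condCov]
  rw [submatrix_sumElim_right, submatrix_sumElim_sumElim, submatrix_sumElim_left, hinv,
    fromCols_mul_fromBlocks, fromCols_mul_fromRows]
  simp only [Matrix.mul_neg, Matrix.neg_mul, Matrix.add_mul, Matrix.mul_add,
    Matrix.sub_mul, Matrix.mul_sub, Matrix.mul_assoc]
  noncomm_ring

end Matrix

theorem stmt_6_general {n₁ n₂ n₃ : Type*} [Fintype n₁] [Fintype n₂] [Fintype n₃]
    [DecidableEq n₂] [DecidableEq n₃]
    (Sig : Matrix ((n₁ ⊕ n₂) ⊕ n₃) ((n₁ ⊕ n₂) ⊕ n₃) ℝ) (hSig : Sig.PosDef)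
    (σ2 : ℝ) (hσ2 : 0 < σ2) (β : n₁ → ℝ) (α : n₂ → ℝ) :
    -- embeddings of the three blocks into the full index set
    let e₁ : n₁ → (n₁ ⊕ n₂) ⊕ n₃ := fun i => Sum.inl (Sum.inl i)
    let e₂ : n₂ → (n₁ ⊕ n₂) ⊕ n₃ := fun i => Sum.inl (Sum.inr i)
    let e₃ : n₃ → (n₁ ⊕ n₂) ⊕ n₃ := fun i => Sum.inr i
    -- T = (T\S) ∪ (S∩T)
    let eT : n₂ ⊕ n₃ → (n₁ ⊕ n₂) ⊕ n₃ := Sum.elim e₂ e₃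
    -- Σ_{S\T | T}
    let Sig1T : Matrix n₁ n₁ ℝ :=
      Sig.submatrix e₁ e₁ -
        Sig.submatrix e₁ eT * (Sig.submatrix eT eT)⁻¹ * Sig.submatrix eT e₁
    -- Σ_{T\S | S∩T}
    let Sig23 : Matrix n₂ n₂ ℝ :=
      Sig.submatrix e₂ e₂ -
        Sig.submatrix e₂ e₃ * (Sig.submatrix e₃ e₃)⁻¹ * Sig.submatrix e₃ e₂
    -- Σ_{(T\S)(S\T) | S∩T}
    let Sig213 : Matrix n₂ n₁ ℝ :=
      Sig.submatrix e₂ e₁ -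
        Sig.submatrix e₂ e₃ * (Sig.submatrix e₃ e₃)⁻¹ * Sig.submatrix e₃ e₁
    let αβ : n₂ → ℝ := Sig23⁻¹ *ᵥ (Sig213 *ᵥ β)
    let Δ₁ : ℝ := (β ⬝ᵥ (Sig1T *ᵥ β)) / σ2
    let Δ₂ : ℝ := ((αβ - α) ⬝ᵥ (Sig23 *ᵥ (αβ - α))) / σ2
    -- A = (S\T) ∪ (T\S), conditioned on B = S∩T
    let eA : n₁ ⊕ n₂ → (n₁ ⊕ n₂) ⊕ n₃ := Sum.elim e₁ e₂
    let SigAB : Matrix (n₁ ⊕ n₂) (n₁ ⊕ n₂) ℝ :=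
      Sig.submatrix eA eA -
        Sig.submatrix eA e₃ * (Sig.submatrix e₃ e₃)⁻¹ * Sig.submatrix e₃ eA
    let w : n₁ ⊕ n₂ → ℝ := Sum.elim β (-α)
    -- Var[X_{S\T}ᵀβ - X_{T\S}ᵀα | X_{S∩T}] = σ²(Δ₁ + Δ₂(α))
    w ⬝ᵥ (SigAB *ᵥ w) = σ2 * (Δ₁ + Δ₂) := by
  intro e₁ e₂ e₃ eT Sig1T Sig23 Sig213 αβ Δ₁ Δ₂ eA SigAB w
  have hdet₃ : IsUnit (Sig.submatrix e₃ e₃).det :=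
    (isUnit_iff_isUnit_det _).mp (hSig.submatrix Sum.inr_injective).isUnit
  have hdetT : IsUnit (Sig.submatrix eT eT).det := by
    refine (isUnit_iff_isUnit_det _).mp (hSig.submatrix ?_).isUnit
    rintro (i | i) (j | j) h <;> simp_all [eT, e₂, e₃]
  have hSig23 : Sig23.IsHermitian := condCov_conjTranspose hSig.1 e₂ e₂ e₃
  have hSig1T : Sig1T = condCov Sig e₁ e₁ e₃ - condCov Sig e₁ e₂ e₃ * Sig23⁻¹ * Sig213 :=
    condCov_sumElim_conditioning Sig e₁ e₁ hdet₃ hdetT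
  have hSigAB : SigAB = fromBlocks (condCov Sig e₁ e₁ e₃) (condCov Sig e₁ e₂ e₃)
      (condCov Sig e₁ e₂ e₃)ᴴ Sig23 := by
    rw [condCov_conjTranspose hSig.1]
    exact condCov_sumElim_sumElim Sig e₁ e₂ e₁ e₂ e₃
  rw [hSigAB, sumElim_dotProduct_fromBlocks_mulVec _ _ hSig23 (isUnit_det_condCov hdet₃ hdetT),
    condCov_conjTranspose hSig.1]
  have hΔ : σ2 * (Δ₁ + Δ₂) = β ⬝ᵥ (Sig1T *ᵥ β) + (αβ + -α) ⬝ᵥ (Sig23 *ᵥ (αβ + -α)) := by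
    simp only [Δ₁, Δ₂, sub_eq_add_neg]
    field_simp
  rw [hΔ, hSig1T]
  rfl

/-- Conditional-variance decomposition for Gaussian linear
combinations.  The index set is partitioned into three parts: `n₁ ~ S\T`,
`n₂ ~ T\S`, `n₃ ~ S∩T`; `Sig` is the (positive definite) joint covariance.
Using the Gaussian formula `Var[vᵀX_A | X_B] = vᵀ Σ_{A|B} v` (with
`Σ_{A|B} = Σ_{AA} - Σ_{AB}Σ_{BB}⁻¹Σ_{BA}`), the conditional variance of
`X_{S\T}ᵀβ - X_{T\S}ᵀα` given `X_{S∩T}` equals `σ²(Δ₁ + Δ₂(α))` where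
`Δ₁ = βᵀ Σ_{S\T|T} β/σ²` and
`Δ₂(α) = (α_β - α)ᵀ Σ_{T\S|S∩T} (α_β - α)/σ²`,
`α_β = Σ_{T\S|S∩T}⁻¹ Σ_{(T\S)(S\T)|S∩T} β`. -/
theorem stmt_6 {n₁ n₂ n₃ : Type*} [Fintype n₁] [Fintype n₂] [Fintype n₃]
    [DecidableEq n₁] [DecidableEq n₂] [DecidableEq n₃]
    (Sig : Matrix ((n₁ ⊕ n₂) ⊕ n₃) ((n₁ ⊕ n₂) ⊕ n₃) ℝ) (hSig : Sig.PosDef)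
    (σ2 : ℝ) (hσ2 : 0 < σ2) (β : n₁ → ℝ) (α : n₂ → ℝ) :
    -- embeddings of the three blocks into the full index set
    let e₁ : n₁ → (n₁ ⊕ n₂) ⊕ n₃ := fun i => Sum.inl (Sum.inl i)
    let e₂ : n₂ → (n₁ ⊕ n₂) ⊕ n₃ := fun i => Sum.inl (Sum.inr i)
    let e₃ : n₃ → (n₁ ⊕ n₂) ⊕ n₃ := fun i => Sum.inr i
    -- T = (T\S) ∪ (S∩T)
    let eT : n₂ ⊕ n₃ → (n₁ ⊕ n₂) ⊕ n₃ := Sum.elim e₂ e₃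
    -- Σ_{S\T | T}
    let Sig1T : Matrix n₁ n₁ ℝ :=
      Sig.submatrix e₁ e₁ -
        Sig.submatrix e₁ eT * (Sig.submatrix eT eT)⁻¹ * Sig.submatrix eT e₁
    -- Σ_{T\S | S∩T}
    let Sig23 : Matrix n₂ n₂ ℝ :=
      Sig.submatrix e₂ e₂ -
        Sig.submatrix e₂ e₃ * (Sig.submatrix e₃ e₃)⁻¹ * Sig.submatrix e₃ e₂
    -- Σ_{(T\S)(S\T) | S∩T}
    let Sig213 : Matrix n₂ n₁ ℝ :=
      Sig.submatrix e₂ e₁ -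
        Sig.submatrix e₂ e₃ * (Sig.submatrix e₃ e₃)⁻¹ * Sig.submatrix e₃ e₁
    let αβ : n₂ → ℝ := Sig23⁻¹ *ᵥ (Sig213 *ᵥ β)
    let Δ₁ : ℝ := (β ⬝ᵥ (Sig1T *ᵥ β)) / σ2
    let Δ₂ : ℝ := ((αβ - α) ⬝ᵥ (Sig23 *ᵥ (αβ - α))) / σ2
    -- A = (S\T) ∪ (T\S), conditioned on B = S∩T
    let eA : n₁ ⊕ n₂ → (n₁ ⊕ n₂) ⊕ n₃ := Sum.elim e₁ e₂
    let SigAB : Matrix (n₁ ⊕ n₂) (n₁ ⊕ n₂) ℝ :=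
      Sig.submatrix eA eA -
        Sig.submatrix eA e₃ * (Sig.submatrix e₃ e₃)⁻¹ * Sig.submatrix e₃ eA
    let w : n₁ ⊕ n₂ → ℝ := Sum.elim β (-α)
    -- Var[X_{S\T}ᵀβ - X_{T\S}ᵀα | X_{S∩T}] = σ²(Δ₁ + Δ₂(α))
    w ⬝ᵥ (SigAB *ᵥ w) = σ2 * (Δ₁ + Δ₂) :=
  stmt_6_general Sig hSig σ2 hσ2 β α
end

section
/- In the bipartite SEM of the previous statement with correlation matrix Σ̃_{ij} = Σ_{ij}/√(Σ_{ii}Σ_{jj}), the mutual incoherence parameter μ := max_{j≠k} |Σ̃_{jk}| equals sβ_max²/(1 + sβ_max²), which tends to 1 as sβ_max² → ∞ and hence violates the condition μ ≤ 1/(2s-1) for all s ≥ 2 when β_max ≥ 1. -/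
/-!
Within the support the covariance is the identity, so those correlations vanish. Two distinct
non-support variables have covariance `x := sβ²` and variance `1 + x`, hence correlation
`x / (1 + x)`, while a support/non-support pair has correlation `β / √(1 + x)`, which is at most
`x / (1 + x)` exactly when `β² (1 + x) ≤ x²`, i.e. `1 + sβ² ≤ s²β²`. Since `x ≥ 2` when `s ≥ 2` and
`β ≥ 1`, `x / (1 + x) ≥ 2/3 > 1/3 ≥ 1/(2s - 1)`.
-/

open Filter Topology

theorem tendsto_div_one_add_atTop : Tendsto (fun x : ℝ => x / (1 + x)) atTop (𝓝 1) := by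
  have hlim : Tendsto (fun x : ℝ => 1 - (1 + x)⁻¹) atTop (𝓝 1) := by
    simpa using (tendsto_const_nhds (x := (1 : ℝ))).sub
      (tendsto_inv_atTop_zero.comp (tendsto_atTop_add_const_left atTop (1 : ℝ) tendsto_id))
  refine hlim.congr' ?_
  filter_upwards [eventually_gt_atTop 0] with x hx
  field_simp
  ring

theorem abs_div_sqrt_one_add_le_div {b x : ℝ} (hx : 0 ≤ x) (h : b ^ 2 * (1 + x) ≤ x ^ 2) :
    |b| / √(1 + x) ≤ x / (1 + x) := by
  have hpos : 0 < 1 + x := by linarith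
  have hnum : |b| * √(1 + x) ≤ x := by
    calc |b| * √(1 + x) = √(b ^ 2 * (1 + x)) := by
          rw [Real.sqrt_mul (sq_nonneg b), Real.sqrt_sq_eq_abs]
      _ ≤ √(x ^ 2) := Real.sqrt_le_sqrt h
      _ = x := Real.sqrt_sq hx
  calc |b| / √(1 + x) = |b| * √(1 + x) / (1 + x) := by
        rw [div_eq_div_iff (Real.sqrt_pos.2 hpos).ne' hpos.ne', mul_assoc,
          Real.mul_self_sqrt hpos.le]
    _ ≤ x / (1 + x) := div_le_div_of_nonneg_right hnum hpos.le

noncomputable def correlation {ι : Type*} (C : ι → ι → ℝ) (i j : ι) : ℝ :=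
  C i j / √(C i i * C j j)

namespace BipartiteSEM

def cov (s m : ℕ) (β : ℝ) : Matrix (Fin s ⊕ Fin m) (Fin s ⊕ Fin m) ℝ :=
  Matrix.fromBlocks 1 (.of fun _ _ => β) (.of fun _ _ => β) (1 + .of fun _ _ => s * β ^ 2)

variable {s m : ℕ} {β : ℝ}

theorem correlation_inl_inl {j j' : Fin s} (h : j ≠ j') :
    correlation (cov s m β) (.inl j) (.inl j') = 0 := by
  simp [correlation, cov, h]

theorem correlation_inl_inr (j : Fin s) (k : Fin m) :
    correlation (cov s m β) (.inl j) (.inr k) = β / √(1 + s * β ^ 2) := by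
  simp [correlation, cov]

theorem correlation_inr_inl (k : Fin m) (j : Fin s) :
    correlation (cov s m β) (.inr k) (.inl j) = β / √(1 + s * β ^ 2) := by
  simp [correlation, cov]

theorem correlation_inr_inr {k k' : Fin m} (h : k ≠ k') :
    correlation (cov s m β) (.inr k) (.inr k') = s * β ^ 2 / (1 + s * β ^ 2) := by
  have hpos : 0 ≤ 1 + s * β ^ 2 := by positivity
  simp [correlation, cov, h, Real.sqrt_mul_self hpos]

theorem isGreatest_abs_correlation (hm : 2 ≤ m) (hsβ : 1 + s * β ^ 2 ≤ (s * β) ^ 2) :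
    IsGreatest {x | ∃ i j, i ≠ j ∧ x = |correlation (cov s m β) i j|}
      (s * β ^ 2 / (1 + s * β ^ 2)) := by
  have hx : 0 ≤ (s : ℝ) * β ^ 2 := by positivity
  have hμ : 0 ≤ s * β ^ 2 / (1 + s * β ^ 2) := by positivity
  have hcross : |β / √(1 + s * β ^ 2)| ≤ s * β ^ 2 / (1 + s * β ^ 2) := by
    rw [abs_div, abs_of_nonneg (Real.sqrt_nonneg _)]
    exact abs_div_sqrt_one_add_le_div hx (by nlinarith)
  refine ⟨⟨.inr ⟨0, by omega⟩, .inr ⟨1, by omega⟩, by simp, ?_⟩, ?_⟩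
  · rw [correlation_inr_inr (by simp), abs_of_nonneg hμ]
  · rintro _ ⟨i | k, j | k', hne, rfl⟩
    · rw [correlation_inl_inl (ne_of_apply_ne _ hne), abs_zero]
      exact hμ
    · rw [correlation_inl_inr]
      exact hcross
    · rw [correlation_inr_inl]
      exact hcross
    · rw [correlation_inr_inr (ne_of_apply_ne _ hne), abs_of_nonneg hμ]

end BipartiteSEM

/-- For the bipartite-SEM covariance matrix
(`Σ_{S*S*} = I_s`, `Σ_{jk} = β_max` for support–nonsupport pairs,
`Σ_{kk} = 1 + sβ_max²` and `Σ_{kk'} = sβ_max²` for nonsupport pairs) with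
correlation matrix `Σ̃_{ij} = Σ_{ij}/√(Σ_{ii}Σ_{jj})`, the mutual incoherence
`μ = max_{i≠j} |Σ̃_{ij}|` equals `sβ_max²/(1+sβ_max²)`; this violates the OMP
condition `μ ≤ 1/(2s-1)` for `s ≥ 2, β_max ≥ 1`, and `x/(1+x) → 1` as
`x = sβ_max² → ∞`. -/
theorem stmt_12 (s m : ℕ) (hs : 2 ≤ s) (hm : 2 ≤ m) (βmax : ℝ) (hβ : 1 ≤ βmax) :
    let Sig : Fin s ⊕ Fin m → Fin s ⊕ Fin m → ℝ := fun a b =>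
      match a, b with
      | Sum.inl j, Sum.inl j' => if j = j' then 1 else 0
      | Sum.inl _, Sum.inr _ => βmax
      | Sum.inr _, Sum.inl _ => βmax
      | Sum.inr k, Sum.inr k' => (if k = k' then 1 else 0) + s * βmax ^ 2
    let corr : Fin s ⊕ Fin m → Fin s ⊕ Fin m → ℝ := fun a b =>
      Sig a b / Real.sqrt (Sig a a * Sig b b)
    IsGreatest {x : ℝ | ∃ i j : Fin s ⊕ Fin m, i ≠ j ∧ x = |corr i j|}
        ((s * βmax ^ 2) / (1 + s * βmax ^ 2)) ∧
      1 / (2 * (s : ℝ) - 1) < (s * βmax ^ 2) / (1 + s * βmax ^ 2) ∧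
      Tendsto (fun x : ℝ => x / (1 + x)) atTop (nhds 1) := by
  intro Sig corr
  have hcorr : corr = correlation (BipartiteSEM.cov s m βmax) := by
    ext i j
    cases i <;> cases j <;> rfl
  have hs' : (2 : ℝ) ≤ s := by exact_mod_cast hs
  have hβ2 : 1 ≤ βmax ^ 2 := one_le_pow₀ hβ
  have hx : 2 ≤ (s : ℝ) * βmax ^ 2 := by nlinarith
  refine ⟨hcorr ▸ BipartiteSEM.isGreatest_abs_correlation hm (by nlinarith), ?_,
    tendsto_div_one_add_atTop⟩
  rw [div_lt_div_iff₀ (by linarith) (by linarith)]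
  nlinarith
end

section
/- In the motivating bipartite SEM (X_1,...,X_s i.i.d. N(0,1); X_k = β_max Σ_{j≤s} X_j + ε_k for k > s with ε_k ~ N(0,1); Y = β_min Σ_{j≤s} X_j + ε), for an alternative support T of size s containing s - r support nodes and r non-support nodes, so that |S*\T| = r ∈ [s], the signal Δ₁(S*,T) := β_{S*\T}^T Σ_{S*\T | T} β_{S*\T}/σ² equals r β_min² / (1 + r² β_max²). -/
open Matrix

/-- In the motivating bipartite SEM (`X_1,…,X_s` i.i.d. `N(0,1)`;
`X_k = β_max ∑_{j≤s} X_j + ε_k` for non-support `k`; `Y = β_min ∑_{j≤s} X_j + ε`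
with `σ² = 1`), consider an alternative support `T` of size `s` containing the
`s - r` support nodes `S*∩T` and `r` non-support nodes `T\S*`, so `|S*\T| = r`.
With `A = S*\T` (covariance `I_r`, independent of `S*∩T`, cross-covariance
`β_max` with each element of `T\S*`) the BSS signal
`Δ₁(S*,T) = β_{S*\T}ᵀ Σ_{S*\T|T} β_{S*\T}` (where
`Σ_{S*\T|T} = Σ_{AA} - Σ_{AT} Σ_{TT}⁻¹ Σ_{TA}` and `β_{S*\T} = β_min 1_r`)
equals `r β_min²/(1 + r² β_max²)`. -/
theorem stmt_19 (s r : ℕ) (hr : 1 ≤ r) (hrs : r ≤ s) (βmax βmin : ℝ)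
    (hβmax : βmax ≠ 0) (hβmin : 0 < βmin) :
    -- T is indexed by (S*∩T) ⊕ (T\S*) of sizes (s-r) and r
    let SigAA : Matrix (Fin r) (Fin r) ℝ := 1
    let SigAT : Matrix (Fin r) (Fin (s - r) ⊕ Fin r) ℝ :=
      Matrix.of fun _ j => Sum.elim (fun _ => (0 : ℝ)) (fun _ => βmax) j
    let SigTT : Matrix (Fin (s - r) ⊕ Fin r) (Fin (s - r) ⊕ Fin r) ℝ :=
      Matrix.fromBlocks
        (1 : Matrix (Fin (s - r)) (Fin (s - r)) ℝ)
        (Matrix.of fun _ _ => βmax)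
        (Matrix.of fun _ _ => βmax)
        ((1 : Matrix (Fin r) (Fin r) ℝ) +
          ((s : ℝ) * βmax ^ 2) • Matrix.of fun _ _ => (1 : ℝ))
    let condCov : Matrix (Fin r) (Fin r) ℝ := SigAA - SigAT * SigTT⁻¹ * SigATᵀ
    let β : Fin r → ℝ := fun _ => βmin
    β ⬝ᵥ (condCov *ᵥ β) = r * βmin ^ 2 / (1 + (r : ℝ) ^ 2 * βmax ^ 2) := by
  intro SigAA SigAT SigTT condCov β
  have hD : (0:ℝ) < 1 + (r:ℝ)^2 * βmax^2 := by positivity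
  set D : ℝ := 1 + (r:ℝ)^2 * βmax^2 with hDdef
  have hD0 : D ≠ 0 := ne_of_gt hD
  set M : Matrix (Fin (s - r) ⊕ Fin r) (Fin (s - r) ⊕ Fin r) ℝ :=
    Matrix.fromBlocks
      ((1 : Matrix (Fin (s-r)) (Fin (s-r)) ℝ) + (βmax^2 * r / D) • Matrix.of fun _ _ => (1:ℝ))
      ((-βmax / D) • Matrix.of fun _ _ => (1:ℝ))
      ((-βmax / D) • Matrix.of fun _ _ => (1:ℝ))
      ((1 : Matrix (Fin r) (Fin r) ℝ) + (-(βmax^2 * r) / D) • Matrix.of fun _ _ => (1:ℝ))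
    with hM
  have hinv : SigTT * M = 1 := by
    ext i j
    rcases i with i | i <;> rcases j with j | j <;>
      simp [SigTT, hM, Matrix.mul_apply, Matrix.fromBlocks, Matrix.one_apply,
        Fintype.sum_sum_type, Finset.sum_add_distrib, mul_add, add_mul,
        Finset.sum_ite_eq, Finset.sum_ite_eq', Finset.mul_sum, Finset.sum_const,
        Finset.card_univ]
    all_goals push_cast [Nat.cast_sub hrs]
    all_goals try split_ifs
    all_goals (field_simp; ring)
  have hinvM : SigTT⁻¹ = M := Matrix.inv_eq_right_inv hinv
  have hcond : ∀ i j : Fin r, condCov i j = (if i = j then (1:ℝ) else 0) - βmax^2 * r / D := by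
    intro i j
    simp [condCov, SigAA, SigAT, hinvM, hM, Matrix.mul_apply, Matrix.fromBlocks,
      Matrix.one_apply, Fintype.sum_sum_type, Finset.sum_add_distrib, mul_add, add_mul,
      Finset.sum_ite_eq, Finset.sum_ite_eq', Finset.mul_sum, Finset.sum_const,
      Finset.card_univ]
    field_simp
    ring
  calc β ⬝ᵥ (condCov *ᵥ β)
      = ∑ i : Fin r, ∑ j : Fin r, βmin * (condCov i j * βmin) := by
        simp [dotProduct, Matrix.mulVec, β, Finset.mul_sum]
    _ = ∑ i : Fin r, ∑ j : Fin r, βmin * (((if i = j then (1:ℝ) else 0) - βmax^2 * r / D) * βmin) := by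
        simp only [hcond]
    _ = r * βmin ^ 2 / D := by
        simp [Finset.sum_sub_distrib, mul_sub, sub_mul, Finset.sum_ite_eq,
          Finset.sum_const, Finset.card_univ, Finset.sum_ite_eq']
        field_simp
        ring
end
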